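/- arXiv:2602.06939 — 4 statements merged into one kernel-verified Lean document; each statement's English description precedes it below -/
import Mathlib

section
/- Assume the range of d is closed in H₁, fix f ∈ H₁, and let u* ∈ (ker d)ᗮ be such that f − d u* is orthogonal to the range of d (i.e. u* is the canonical minimizer of J(u) := ‖f − d u‖²). Assume there exists α > 0 such that ⟪d*(d w), w⟫ ≥ α·‖w‖² for all w ∈ (ker d)ᗮ. Then for every u ∈ (ker d)ᗮ, α·‖u − u*‖² ≤ ‖f − d u‖² − ‖f − d u*‖². Consequently, if (u_N) is any sequence in (ker d)ᗮ with ‖f − d u_N‖² → inf_{u ∈ H₀} ‖f − d u‖², then u_N → u* in norm. -/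
/-!
Since `f - d u*` is orthogonal to the range of `d`, Pythagoras gives
`‖f - d u‖² = ‖f - d u*‖² + ‖d (u - u*)‖²`, and `‖d w‖² = ⟪d* d w, w⟫`. On `(ker d)ᗮ` the
coercivity of `d* d` therefore bounds the excess `‖f - d u‖² - ‖f - d u*‖²` from below by
`α ‖u - u*‖²`. The same identity shows that the infimum of `‖f - d u‖²` is attained at `u*`,
so a minimizing sequence in `(ker d)ᗮ` has `‖u_N - u*‖² → 0`.
-/

open RealInnerProductSpace Filter Topology

section LeastSquares

variable {E F : Type*} [NormedAddCommGroup F] [InnerProductSpace ℝ F]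

theorem norm_sub_apply_sq_eq_of_mem_orthogonal_range [AddCommGroup E] [Module ℝ E]
    (T : E →ₗ[ℝ] F) {f : F} {v : E} (hv : f - T v ∈ (LinearMap.range T)ᗮ) (u : E) :
    ‖f - T u‖ ^ 2 = ‖f - T v‖ ^ 2 + ‖T (u - v)‖ ^ 2 := by
  have horth : ⟪f - T v, T (v - u)⟫ = 0 :=
    Submodule.inner_left_of_mem_orthogonal (LinearMap.mem_range_self T _) hv
  have hdecomp : f - T u = (f - T v) + T (v - u) := by
    rw [map_sub]; abel
  rw [hdecomp, norm_add_sq_real, horth, ← norm_neg (T (v - u)), ← map_neg, neg_sub]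
  ring

theorem iInf_norm_sub_apply_sq_eq_of_mem_orthogonal_range [AddCommGroup E] [Module ℝ E]
    (T : E →ₗ[ℝ] F) {f : F} {v : E} (hv : f - T v ∈ (LinearMap.range T)ᗮ) :
    ⨅ u, ‖f - T u‖ ^ 2 = ‖f - T v‖ ^ 2 := by
  have hbdd : BddBelow (Set.range fun u => ‖f - T u‖ ^ 2) :=
    ⟨0, by rintro _ ⟨u, rfl⟩; positivity⟩
  refine le_antisymm (ciInf_le hbdd v) (le_ciInf fun u => ?_)
  rw [norm_sub_apply_sq_eq_of_mem_orthogonal_range T hv u]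
  exact le_add_of_nonneg_right (sq_nonneg _)

theorem mul_norm_sub_sq_le_of_mem_orthogonal_range [SeminormedAddCommGroup E] [Module ℝ E]
    (T : E →ₗ[ℝ] F) (K : Submodule ℝ E) {α : ℝ}
    (hcoer : ∀ w ∈ K, α * ‖w‖ ^ 2 ≤ ‖T w‖ ^ 2) {f : F} {u v : E} (hu : u ∈ K) (hv : v ∈ K)
    (horth : f - T v ∈ (LinearMap.range T)ᗮ) :
    α * ‖u - v‖ ^ 2 ≤ ‖f - T u‖ ^ 2 - ‖f - T v‖ ^ 2 := by
  rw [norm_sub_apply_sq_eq_of_mem_orthogonal_range T horth u, add_sub_cancel_left]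
  exact hcoer _ (K.sub_mem hu hv)

end LeastSquares

theorem tendsto_of_mul_norm_sub_sq_le {ι E : Type*} [SeminormedAddCommGroup E] {l : Filter ι}
    {x : ι → E} {a : E} {g : ι → ℝ} {c α : ℝ} (hα : 0 < α)
    (hle : ∀ i, α * ‖x i - a‖ ^ 2 ≤ g i - c) (hg : Tendsto g l (𝓝 c)) :
    Tendsto x l (𝓝 a) := by
  have hbound : Tendsto (fun i => (g i - c) / α) l (𝓝 0) := by
    simpa using (hg.sub_const c).div_const α
  have hsq : Tendsto (fun i => ‖x i - a‖ ^ 2) l (𝓝 0) :=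
    squeeze_zero (fun _ => sq_nonneg _)
      (fun i => (le_div_iff₀' hα).2 (hle i)) hbound
  rw [tendsto_iff_norm_sub_tendsto_zero]
  simpa [Real.sqrt_sq (norm_nonneg _)] using hsq.sqrt

theorem stmt10_general {H₀ H₁ : Type*}
    [NormedAddCommGroup H₀] [InnerProductSpace ℝ H₀] [CompleteSpace H₀]
    [NormedAddCommGroup H₁] [InnerProductSpace ℝ H₁] [CompleteSpace H₁]
    (d : H₀ →L[ℝ] H₁)
    (f : H₁) (ustar : H₀)
    (hmem : ustar ∈ (LinearMap.ker (d : H₀ →ₗ[ℝ] H₁))ᗮ)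
    (horth : (f - d ustar) ∈ (LinearMap.range (d : H₀ →ₗ[ℝ] H₁))ᗮ)
    (α : ℝ) (hα : 0 < α)
    (hcoer : ∀ w ∈ (LinearMap.ker (d : H₀ →ₗ[ℝ] H₁))ᗮ,
      α * ‖w‖ ^ 2 ≤ ⟪(ContinuousLinearMap.adjoint d) (d w), w⟫) :
    (∀ u ∈ (LinearMap.ker (d : H₀ →ₗ[ℝ] H₁))ᗮ,
      α * ‖u - ustar‖ ^ 2 ≤ ‖f - d u‖ ^ 2 - ‖f - d ustar‖ ^ 2) ∧
    (∀ uN : ℕ → H₀, (∀ N, uN N ∈ (LinearMap.ker (d : H₀ →ₗ[ℝ] H₁))ᗮ) →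
      Tendsto (fun N => ‖f - d (uN N)‖ ^ 2) atTop (nhds (⨅ u : H₀, ‖f - d u‖ ^ 2)) →
      Tendsto uN atTop (nhds ustar)) := by
  have hcoer_norm : ∀ w ∈ (LinearMap.ker (d : H₀ →ₗ[ℝ] H₁))ᗮ, α * ‖w‖ ^ 2 ≤ ‖d w‖ ^ 2 := by
    intro w hw
    simpa [ContinuousLinearMap.adjoint_inner_left, real_inner_self_eq_norm_sq] using hcoer w hw
  have hconvex : ∀ u ∈ (LinearMap.ker (d : H₀ →ₗ[ℝ] H₁))ᗮ,
      α * ‖u - ustar‖ ^ 2 ≤ ‖f - d u‖ ^ 2 - ‖f - d ustar‖ ^ 2 := fun u hu =>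
    mul_norm_sub_sq_le_of_mem_orthogonal_range (d : H₀ →ₗ[ℝ] H₁) _ hcoer_norm hu hmem horth
  refine ⟨hconvex, fun uN hN hmin => ?_⟩
  have hinf : ⨅ u, ‖f - d u‖ ^ 2 = ‖f - d ustar‖ ^ 2 :=
    iInf_norm_sub_apply_sq_eq_of_mem_orthogonal_range (d : H₀ →ₗ[ℝ] H₁) horth
  rw [hinf] at hmin
  exact tendsto_of_mul_norm_sub_sq_le hα (fun N => hconvex (uN N) (hN N)) hmin

/-- Strong convexity on `(ker d)ᗮ` and convergence of near-minimizers.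
If the range of `d` is closed, `u* ∈ (ker d)ᗮ` with `f - d u* ⊥ range d`, and
`⟪d*(d w), w⟫ ≥ α ‖w‖²` for all `w ∈ (ker d)ᗮ` with `α > 0`, then
`α ‖u - u*‖² ≤ ‖f - d u‖² - ‖f - d u*‖²` for every `u ∈ (ker d)ᗮ`; consequently any
sequence `(u_N)` in `(ker d)ᗮ` with `‖f - d u_N‖² → ⨅ u, ‖f - d u‖²` converges to `u*`
in norm. -/
theorem stmt10 {H₀ H₁ : Type*}
    [NormedAddCommGroup H₀] [InnerProductSpace ℝ H₀] [CompleteSpace H₀]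
    [NormedAddCommGroup H₁] [InnerProductSpace ℝ H₁] [CompleteSpace H₁]
    (d : H₀ →L[ℝ] H₁)
    (hclosed : IsClosed ((LinearMap.range (d : H₀ →ₗ[ℝ] H₁) : Submodule ℝ H₁) : Set H₁))
    (f : H₁) (ustar : H₀)
    (hmem : ustar ∈ (LinearMap.ker (d : H₀ →ₗ[ℝ] H₁))ᗮ)
    (horth : (f - d ustar) ∈ (LinearMap.range (d : H₀ →ₗ[ℝ] H₁))ᗮ)
    (α : ℝ) (hα : 0 < α)
    (hcoer : ∀ w ∈ (LinearMap.ker (d : H₀ →ₗ[ℝ] H₁))ᗮ,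
      α * ‖w‖ ^ 2 ≤ ⟪(ContinuousLinearMap.adjoint d) (d w), w⟫) :
    (∀ u ∈ (LinearMap.ker (d : H₀ →ₗ[ℝ] H₁))ᗮ,
      α * ‖u - ustar‖ ^ 2 ≤ ‖f - d u‖ ^ 2 - ‖f - d ustar‖ ^ 2) ∧
    (∀ uN : ℕ → H₀, (∀ N, uN N ∈ (LinearMap.ker (d : H₀ →ₗ[ℝ] H₁))ᗮ) →
      Tendsto (fun N => ‖f - d (uN N)‖ ^ 2) atTop (nhds (⨅ u : H₀, ‖f - d u‖ ^ 2)) →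
      Tendsto uN atTop (nhds ustar)) :=
  stmt10_general d f ustar hmem horth α hα hcoer
end

section
/- Let V : ℕ → ℝ be a nonnegative sequence, let c > 0, d ≥ 0, let α : ℕ → ℝ be positive with ∑_t α_t = ∞ (the series diverges) and α_t → 0, and let β : ℕ → ℝ be nonnegative with ∑_t β_t < ∞ (summable). Suppose V_{t+1} ≤ (1 − c·α_t)·V_t + α_t·d + β_t for all t ≥ 0. Then limsup_{t→∞} V_t ≤ d/c. -/
/-!
The excess `u_t = (V_t - d/c)⁺` over the fixed point `d/c` of `v ↦ (1 - c α_t) v + α_t d` obeys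
`u_{t+1} ≤ (1 - c α_t) u_t + β_t` as soon as `c α_t ≤ 1`. Iterating this with `1 - x ≤ e^{-x}`
gives `u_n ≤ exp (-c ∑_{T ≤ k < n} α_k) u_T + ∑_{T ≤ k < n} β_k`: the second term is a tail of a
convergent series and the first tends to `0` because `∑ α_k = ∞`, so `u_t → 0`.
-/

open Filter Topology

theorem le_exp_neg_sum_mul_add_sum_of_le_one_sub_mul_add {u a b : ℕ → ℝ} {T : ℕ}
    (hu : ∀ n, 0 ≤ u n) (ha : ∀ n, 0 ≤ a n) (hb : ∀ n, 0 ≤ b n)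
    (hrec : ∀ n ≥ T, u (n + 1) ≤ (1 - a n) * u n + b n) :
    ∀ n ≥ T, u n ≤ Real.exp (-∑ k ∈ Finset.Ico T n, a k) * u T + ∑ k ∈ Finset.Ico T n, b k := by
  intro n hn
  induction n, hn using Nat.le_induction with
  | base => simp
  | succ n hn ih =>
    set A := ∑ k ∈ Finset.Ico T n, a k
    set B := ∑ k ∈ Finset.Ico T n, b k
    have hB : 0 ≤ B := Finset.sum_nonneg fun k _ => hb k
    have hexp_le_one : Real.exp (-a n) ≤ 1 := Real.exp_le_one_iff.2 (neg_nonpos.2 (ha n))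
    rw [Finset.sum_Ico_succ_top hn, Finset.sum_Ico_succ_top hn]
    calc u (n + 1) ≤ (1 - a n) * u n + b n := hrec n hn
      _ ≤ Real.exp (-a n) * u n + b n := by
        gcongr
        · exact hu n
        · linarith [Real.add_one_le_exp (-a n)]
      _ ≤ Real.exp (-a n) * (Real.exp (-A) * u T + B) + b n := by gcongr
      _ = Real.exp (-(A + a n)) * u T + Real.exp (-a n) * B + b n := by
        rw [neg_add, Real.exp_add]; ring
      _ ≤ Real.exp (-(A + a n)) * u T + (B + b n) := by
        linarith [mul_le_mul_of_nonneg_right hexp_le_one hB]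

theorem tendsto_zero_of_le_one_sub_mul_add {u a b : ℕ → ℝ}
    (hu : ∀ n, 0 ≤ u n) (ha : ∀ n, 0 ≤ a n) (hb : ∀ n, 0 ≤ b n) (hb_sum : Summable b)
    (ha_div : Tendsto (fun n => ∑ k ∈ Finset.range n, a k) atTop atTop)
    (hrec : ∀ᶠ n in atTop, u (n + 1) ≤ (1 - a n) * u n + b n) :
    Tendsto u atTop (𝓝 0) := by
  refine tendsto_order.2 ⟨fun x hx => .of_forall fun n => hx.trans_le (hu n), fun ε hε => ?_⟩
  obtain ⟨T₀, hT₀⟩ := eventually_atTop.1 hrec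
  obtain ⟨N, hN⟩ := Metric.cauchySeq_iff.1 hb_sum.hasSum.tendsto_sum_nat.cauchySeq (ε / 2)
    (half_pos hε)
  set T := max T₀ N
  have htail : ∀ n ≥ T, ∑ k ∈ Finset.Ico T n, b k < ε / 2 := fun n hn => by
    have := hN n (le_of_max_le_right hn) T (le_max_right _ _)
    rw [Real.dist_eq, ← Finset.sum_Ico_eq_sub _ hn] at this
    exact (le_abs_self _).trans_lt this
  have hdecay : Tendsto (fun n => Real.exp (-∑ k ∈ Finset.Ico T n, a k) * u T) atTop (𝓝 0) := by
    have hA : Tendsto (fun n => ∑ k ∈ Finset.Ico T n, a k) atTop atTop := by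
      refine (tendsto_atTop_add_const_right atTop (-∑ k ∈ Finset.range T, a k) ha_div).congr' ?_
      filter_upwards [eventually_ge_atTop T] with n hn
      rw [Finset.sum_Ico_eq_sub _ hn, sub_eq_add_neg]
    simpa using (Real.tendsto_exp_neg_atTop_nhds_zero.comp hA).mul_const (u T)
  have hbound := le_exp_neg_sum_mul_add_sum_of_le_one_sub_mul_add (T := T) hu ha hb
    fun n hn => hT₀ n (le_of_max_le_left hn)
  filter_upwards [hdecay.eventually_lt_const (half_pos hε), eventually_ge_atTop T]
    with n hn_decay hn
  linarith [hbound n hn, htail n hn]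

theorem posPart_sub_div_le_one_sub_mul_add {v v' c a d b : ℝ} (hc : 0 < c) (hca : c * a ≤ 1)
    (hb : 0 ≤ b) (h : v' ≤ (1 - c * a) * v + a * d + b) :
    (v' - d / c)⁺ ≤ (1 - c * a) * (v - d / c)⁺ + b := by
  have hca' : 0 ≤ 1 - c * a := sub_nonneg.2 hca
  have hshift : (1 - c * a) * v + a * d = (1 - c * a) * (v - d / c) + d / c := by
    field_simp; ring
  refine sup_le ?_ (by positivity)
  nlinarith [mul_le_mul_of_nonneg_left (le_posPart (v - d / c)) hca']

theorem stmt14_general (V : ℕ → ℝ) (hV : ∀ t, 0 ≤ V t)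
    (c : ℝ) (hc : 0 < c) (d : ℝ)
    (α : ℕ → ℝ) (hα_pos : ∀ t, 0 < α t)
    (hα_div : Tendsto (fun n => ∑ t ∈ Finset.range n, α t) atTop atTop)
    (hα_to_zero : Tendsto α atTop (nhds 0))
    (β : ℕ → ℝ) (hβ_nonneg : ∀ t, 0 ≤ β t) (hβ_sum : Summable β)
    (hrec : ∀ t, V (t + 1) ≤ (1 - c * α t) * V t + α t * d + β t) :
    limsup V atTop ≤ d / c := by
  have hstep_small : ∀ᶠ t in atTop, c * α t ≤ 1 :=
    (hα_to_zero.const_mul c).eventually_le_const (by simp)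
  have hexcess : Tendsto (fun t => (V t - d / c)⁺) atTop (𝓝 0) := by
    refine tendsto_zero_of_le_one_sub_mul_add (fun t => posPart_nonneg _)
      (fun t => (mul_pos hc (hα_pos t)).le) hβ_nonneg hβ_sum ?_ ?_
    · simpa [Finset.mul_sum] using hα_div.const_mul_atTop hc
    · filter_upwards [hstep_small] with t ht
      exact posPart_sub_div_le_one_sub_mul_add hc ht (hβ_nonneg t) (hrec t)
  have hbound : Tendsto (fun t => d / c + (V t - d / c)⁺) atTop (𝓝 (d / c)) := by
    simpa using hexcess.const_add (d / c)
  calc limsup V atTop ≤ limsup (fun t => d / c + (V t - d / c)⁺) atTop :=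
        limsup_le_limsup (.of_forall fun t => by linarith [le_posPart (V t - d / c)])
          (isCoboundedUnder_le_of_le atTop hV) hbound.isBoundedUnder_le
    _ = d / c := hbound.limsup_eq

/-- Deterministic sequence lemma. If `V_t ≥ 0`,
`V_{t+1} ≤ (1 - c α_t) V_t + α_t d + β_t` with `c > 0`, `d ≥ 0`, step sizes `α_t > 0`
satisfying `∑ α_t = ∞` and `α_t → 0`, and nonnegative summable perturbations `β_t`,
then `limsup_{t→∞} V_t ≤ d / c`. -/
theorem stmt14 (V : ℕ → ℝ) (hV : ∀ t, 0 ≤ V t)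
    (c : ℝ) (hc : 0 < c) (d : ℝ) (hd : 0 ≤ d)
    (α : ℕ → ℝ) (hα_pos : ∀ t, 0 < α t)
    (hα_div : Tendsto (fun n => ∑ t ∈ Finset.range n, α t) atTop atTop)
    (hα_to_zero : Tendsto α atTop (nhds 0))
    (β : ℕ → ℝ) (hβ_nonneg : ∀ t, 0 ≤ β t) (hβ_sum : Summable β)
    (hrec : ∀ t, V (t + 1) ≤ (1 - c * α t) * V t + α t * d + β t) :
    limsup V atTop ≤ d / c :=
  stmt14_general V hV c hc d α hα_pos hα_div hα_to_zero β hβ_nonneg hβ_sum hrec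
end

section
/- Let E be a real inner product space, let A : E → E be a continuous linear map, let λ > 0 and L > 0 satisfy ⟪A x, x⟫ ≥ λ·‖x‖² and ‖A x‖ ≤ L·‖x‖ for all x ∈ E, let B, ε ≥ 0, let e : ℕ → E satisfy ‖e_t‖ ≤ B·ε for all t, let α : ℕ → ℝ satisfy 0 < α_t ≤ λ/(4L²) for all t, and let x : ℕ → E satisfy the recursion x_{t+1} = x_t − α_t·(A x_t + e_t). Then, setting V_t := ‖x_t‖², for every t: V_{t+1} ≤ (1 − (λ/2)·α_t)·V_t + α_t·(B²/λ)·ε² + 2·α_t²·B²·ε². -/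
open RealInnerProductSpace

lemma norm_add_sq_le_two_mul {F : Type*} [SeminormedAddCommGroup F] (v w : F) :
    ‖v + w‖ ^ 2 ≤ 2 * (‖v‖ ^ 2 + ‖w‖ ^ 2) :=
  (pow_le_pow_left₀ (norm_nonneg _) (norm_add_le v w) 2).trans add_sq_le

/- `v` stands for `A u`. The cross term `⟪u, e⟫` is absorbed by Young's inequality with weight `lam`,
costing `a lam ‖u‖²` of the `2 a lam ‖u‖²` gained from monotonicity, and the step-size bound makes
the second-order term `2 a² L² ‖u‖²` at most `(lam / 2) a ‖u‖²`. -/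
lemma norm_sub_smul_add_sq_le {E : Type*} [NormedAddCommGroup E] [InnerProductSpace ℝ E]
    {lam L a : ℝ} {u v : E} (hlam : 0 < lam) (hmono : lam * ‖u‖ ^ 2 ≤ ⟪v, u⟫)
    (hlip : ‖v‖ ≤ L * ‖u‖) (ha : 0 ≤ a) (ha_le : a ≤ lam / (4 * L ^ 2)) (e : E) :
    ‖u - a • (v + e)‖ ^ 2 ≤
      (1 - lam / 2 * a) * ‖u‖ ^ 2 + a / lam * ‖e‖ ^ 2 + 2 * a ^ 2 * ‖e‖ ^ 2 := by
  have hexpand : ‖u - a • (v + e)‖ ^ 2 =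
      ‖u‖ ^ 2 - 2 * a * ⟪v, u⟫ - 2 * a * ⟪u, e⟫ + a ^ 2 * ‖v + e‖ ^ 2 := by
    rw [norm_sub_sq_real, real_inner_smul_right, inner_add_right, real_inner_comm v, norm_smul,
      mul_pow, Real.norm_eq_abs, sq_abs]
    ring
  have hcross : -⟪u, e⟫ ≤ ‖u‖ * ‖e‖ := neg_le.mp (neg_le_of_abs_le (abs_real_inner_le_norm u e))
  have hyoung : 2 * ‖u‖ * ‖e‖ ≤ lam * ‖u‖ ^ 2 + lam⁻¹ * ‖e‖ ^ 2 := two_mul_le_add_mul_sq hlam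
  have hsum : ‖v + e‖ ^ 2 ≤ 2 * (L ^ 2 * ‖u‖ ^ 2 + ‖e‖ ^ 2) := by
    have hv : ‖v‖ ^ 2 ≤ L ^ 2 * ‖u‖ ^ 2 := by
      rw [← mul_pow]; exact pow_le_pow_left₀ (norm_nonneg v) hlip 2
    linarith [norm_add_sq_le_two_mul v e]
  have hstep : a * (4 * L ^ 2) ≤ lam := mul_le_of_le_div₀ hlam.le (by positivity) ha_le
  rw [hexpand, div_eq_mul_inv a lam]
  linarith [mul_le_mul_of_nonneg_left hmono ha, mul_le_mul_of_nonneg_left hcross ha,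
    mul_le_mul_of_nonneg_left hyoung ha, mul_le_mul_of_nonneg_left hsum (sq_nonneg a),
    mul_le_mul_of_nonneg_right hstep (mul_nonneg ha (sq_nonneg ‖u‖))]

theorem stmt15_general {E : Type*} [NormedAddCommGroup E] [InnerProductSpace ℝ E]
    (A : E →L[ℝ] E) (lam L : ℝ) (hlam : 0 < lam)
    (hmono : ∀ x : E, lam * ‖x‖ ^ 2 ≤ ⟪A x, x⟫)
    (hlip : ∀ x : E, ‖A x‖ ≤ L * ‖x‖)
    (B ε : ℝ)
    (e : ℕ → E) (he : ∀ t, ‖e t‖ ≤ B * ε)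
    (α : ℕ → ℝ) (hα_pos : ∀ t, 0 < α t) (hα_le : ∀ t, α t ≤ lam / (4 * L ^ 2))
    (x : ℕ → E) (hx : ∀ t, x (t + 1) = x t - α t • (A (x t) + e t)) :
    ∀ t, ‖x (t + 1)‖ ^ 2 ≤
      (1 - (lam / 2) * α t) * ‖x t‖ ^ 2 + α t * (B ^ 2 / lam) * ε ^ 2 +
        2 * (α t) ^ 2 * B ^ 2 * ε ^ 2 := by
  intro t
  have ha := (hα_pos t).le
  have hbias : ‖e t‖ ^ 2 ≤ B ^ 2 * ε ^ 2 := by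
    rw [← mul_pow]; exact pow_le_pow_left₀ (norm_nonneg _) (he t) 2
  rw [hx t]
  calc _ ≤ (1 - lam / 2 * α t) * ‖x t‖ ^ 2 + α t / lam * ‖e t‖ ^ 2 + 2 * α t ^ 2 * ‖e t‖ ^ 2 :=
        norm_sub_smul_add_sq_le hlam (hmono _) (hlip _) ha (hα_le t) _
    _ ≤ (1 - lam / 2 * α t) * ‖x t‖ ^ 2 + α t / lam * (B ^ 2 * ε ^ 2) +
          2 * α t ^ 2 * (B ^ 2 * ε ^ 2) := by gcongr
    _ = _ := by ring

/-- One-step contraction inequality for the perturbed recursion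
`x_{t+1} = x_t - α_t (A x_t + e_t)` under strong monotonicity `⟪A x, x⟫ ≥ λ ‖x‖²`,
Lipschitz bound `‖A x‖ ≤ L ‖x‖`, bias bound `‖e_t‖ ≤ B ε`, and step sizes
`0 < α_t ≤ λ / (4 L²)`: with `V_t = ‖x_t‖²`,
`V_{t+1} ≤ (1 - (λ/2) α_t) V_t + α_t (B²/λ) ε² + 2 α_t² B² ε²`. -/
theorem stmt15 {E : Type*} [NormedAddCommGroup E] [InnerProductSpace ℝ E]
    (A : E →L[ℝ] E) (lam L : ℝ) (hlam : 0 < lam) (hL : 0 < L)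
    (hmono : ∀ x : E, lam * ‖x‖ ^ 2 ≤ ⟪A x, x⟫)
    (hlip : ∀ x : E, ‖A x‖ ≤ L * ‖x‖)
    (B ε : ℝ) (hB : 0 ≤ B) (hε : 0 ≤ ε)
    (e : ℕ → E) (he : ∀ t, ‖e t‖ ≤ B * ε)
    (α : ℕ → ℝ) (hα_pos : ∀ t, 0 < α t) (hα_le : ∀ t, α t ≤ lam / (4 * L ^ 2))
    (x : ℕ → E) (hx : ∀ t, x (t + 1) = x t - α t • (A (x t) + e t)) :
    ∀ t, ‖x (t + 1)‖ ^ 2 ≤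
      (1 - (lam / 2) * α t) * ‖x t‖ ^ 2 + α t * (B ^ 2 / lam) * ε ^ 2 +
        2 * (α t) ^ 2 * B ^ 2 * ε ^ 2 :=
  stmt15_general A lam L hlam hmono hlip B ε e he α hα_pos hα_le x hx
end

section
/- Let E be a real inner product space, let A : E → E be a continuous linear map, let λ > 0 and L > 0 satisfy ⟪A x, x⟫ ≥ λ·‖x‖² and ‖A x‖ ≤ L·‖x‖ for all x ∈ E, let B, ε ≥ 0, let e : ℕ → E satisfy ‖e_t‖ ≤ B·ε for all t, and let α : ℕ → ℝ satisfy 0 < α_t ≤ λ/(4L²) for all t, α_t → 0, ∑_t α_t = ∞, and ∑_t α_t² < ∞. If x : ℕ → E satisfies x_{t+1} = x_t − α_t·(A x_t + e_t), then limsup_{t→∞} ‖x_t‖ ≤ √2·(B/λ)·ε. In particular, if ε = 0 then ‖x_t‖ → 0. -/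
/-!
Put `b = B ε` and `r = √2 b / λ`. Expanding the square, strong monotonicity, the Lipschitz bound,
AM-GM on the cross term `2 α ‖x‖ b`, and `α ≤ λ / (4 L²)` give the one-step inequality
`‖x_{t+1}‖² - r² ≤ (1 - λ α_t) (‖x_t‖² - r²) + 2 b² α_t²`.
Unrolled from a late time `N`, the initial term is damped by `∏ (1 - λ α_t) ≤ exp (-λ ∑ α_t) → 0`,
and the accumulated perturbation is at most the tail `∑_{t ≥ N} 2 b² α_t²` of a convergent series.
Hence `‖x_t‖² < r² + δ` eventually, for every `δ > 0`.
-/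

open RealInnerProductSpace Filter Topology Finset

section Recursion

variable {u μ β : ℕ → ℝ}

theorem le_mul_prod_add_sum_Ico (hμ0 : ∀ t, 0 ≤ μ t) (hμ1 : ∀ t, μ t ≤ 1)
    (hβ0 : ∀ t, 0 ≤ β t) (hrec : ∀ t, u (t + 1) ≤ (1 - μ t) * u t + β t)
    {N n : ℕ} (hNn : N ≤ n) :
    u n ≤ u N * ∏ t ∈ Ico N n, (1 - μ t) + ∑ t ∈ Ico N n, β t := by
  induction n, hNn using Nat.le_induction with
  | base => simp
  | succ n hNn ih =>
    rw [prod_Ico_succ_top hNn, sum_Ico_succ_top hNn]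
    have hS : 0 ≤ ∑ t ∈ Ico N n, β t := sum_nonneg fun t _ => hβ0 t
    have hdamp : 0 ≤ 1 - μ n := sub_nonneg.2 (hμ1 n)
    calc u (n + 1) ≤ (1 - μ n) * u n + β n := hrec n
      _ ≤ (1 - μ n) * (u N * ∏ t ∈ Ico N n, (1 - μ t) + ∑ t ∈ Ico N n, β t) + β n := by
          gcongr
      _ = u N * ((∏ t ∈ Ico N n, (1 - μ t)) * (1 - μ n))
            + (1 - μ n) * ∑ t ∈ Ico N n, β t + β n := by ring
      _ ≤ u N * ((∏ t ∈ Ico N n, (1 - μ t)) * (1 - μ n)) + (∑ t ∈ Ico N n, β t + β n) := by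
          rw [← add_assoc]
          gcongr
          exact mul_le_of_le_one_left hS (by linarith [hμ0 n])

theorem tendsto_prod_Ico_one_sub (hμ1 : ∀ t, μ t ≤ 1)
    (hμ : Tendsto (fun n => ∑ t ∈ range n, μ t) atTop atTop) (N : ℕ) :
    Tendsto (fun n => ∏ t ∈ Ico N n, (1 - μ t)) atTop (𝓝 0) := by
  have hsum : Tendsto (fun n => ∑ t ∈ Ico N n, μ t) atTop atTop := by
    refine (tendsto_atTop_add_const_right _ (-∑ t ∈ range N, μ t) hμ).congr' ?_
    filter_upwards [eventually_ge_atTop N] with n hNn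
    rw [sum_Ico_eq_sub _ hNn, sub_eq_add_neg]
  refine squeeze_zero (fun n => prod_nonneg fun t _ => sub_nonneg.2 (hμ1 t)) (fun n => ?_)
    (Real.tendsto_exp_atBot.comp (tendsto_neg_atTop_atBot.comp hsum))
  calc ∏ t ∈ Ico N n, (1 - μ t) ≤ ∏ t ∈ Ico N n, Real.exp (-μ t) :=
        prod_le_prod (fun t _ => sub_nonneg.2 (hμ1 t)) fun t _ => Real.one_sub_le_exp_neg (μ t)
    _ = Real.exp (-∑ t ∈ Ico N n, μ t) := by rw [← sum_neg_distrib, Real.exp_sum]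

theorem eventually_lt_of_le_one_sub_mul_add (hμ0 : ∀ t, 0 ≤ μ t) (hμ1 : ∀ t, μ t ≤ 1)
    (hμ : Tendsto (fun n => ∑ t ∈ range n, μ t) atTop atTop)
    (hβ0 : ∀ t, 0 ≤ β t) (hβ : Summable β)
    (hrec : ∀ t, u (t + 1) ≤ (1 - μ t) * u t + β t) {δ : ℝ} (hδ : 0 < δ) :
    ∀ᶠ n in atTop, u n < δ := by
  obtain ⟨N, hN⟩ : ∃ N, ∑' k, β (k + N) < δ / 2 :=
    ((tendsto_sum_nat_add β).eventually (gt_mem_nhds (half_pos hδ))).exists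
  have htail : ∀ n, ∑ t ∈ Ico N n, β t ≤ ∑' k, β (k + N) := fun n => by
    rw [sum_Ico_eq_sum_range]
    simp_rw [add_comm N]
    exact ((summable_nat_add_iff N).2 hβ).sum_le_tsum _ fun k _ => hβ0 _
  have hdamped : ∀ᶠ n in atTop, u N * ∏ t ∈ Ico N n, (1 - μ t) < δ / 2 := by
    have := (tendsto_prod_Ico_one_sub hμ1 hμ N).const_mul (u N)
    rw [mul_zero] at this
    exact this.eventually (gt_mem_nhds (half_pos hδ))
  filter_upwards [eventually_ge_atTop N, hdamped] with n hNn hn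
  linarith [le_mul_prod_add_sum_Ico hμ0 hμ1 hβ0 hrec hNn, htail n]

end Recursion

theorem limsup_le_of_forall_eventually_le_add {f : ℕ → ℝ} (hf : ∀ t, 0 ≤ f t) {r : ℝ}
    (h : ∀ δ > 0, ∀ᶠ t in atTop, f t ≤ r + δ) : limsup f atTop ≤ r :=
  le_of_forall_pos_le_add fun δ hδ =>
    limsup_le_of_le (isBoundedUnder_of ⟨0, hf⟩).isCoboundedUnder_le (h δ hδ)

theorem tendsto_nhds_zero_of_forall_eventually_le {f : ℕ → ℝ} (hf : ∀ t, 0 ≤ f t)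
    (h : ∀ δ > 0, ∀ᶠ t in atTop, f t ≤ δ) : Tendsto f atTop (𝓝 0) :=
  tendsto_order.2 ⟨fun a ha => Eventually.of_forall fun t => ha.trans_le (hf t),
    fun a ha => (h (a / 2) (half_pos ha)).mono fun t ht => by linarith⟩

section Iteration

variable {E : Type*} [NormedAddCommGroup E] [InnerProductSpace ℝ E] {A : E → E} {lam L : ℝ}

theorem le_of_forall_mul_norm_sq_le_inner [Nontrivial E]
    (hmono : ∀ x : E, lam * ‖x‖ ^ 2 ≤ ⟪A x, x⟫) (hlip : ∀ x : E, ‖A x‖ ≤ L * ‖x‖) :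
    lam ≤ L := by
  obtain ⟨y, hy⟩ := exists_ne (0 : E)
  have hy0 : 0 < ‖y‖ ^ 2 := by positivity
  refine le_of_mul_le_mul_right ?_ hy0
  calc lam * ‖y‖ ^ 2 ≤ ⟪A y, y⟫ := hmono y
    _ ≤ ‖A y‖ * ‖y‖ := real_inner_le_norm _ _
    _ ≤ L * ‖y‖ * ‖y‖ := by gcongr; exact hlip y
    _ = L * ‖y‖ ^ 2 := by ring

theorem norm_sq_sub_smul_sub_le (hlam : 0 < lam)
    (hmono : ∀ x : E, lam * ‖x‖ ^ 2 ≤ ⟪A x, x⟫) (hlip : ∀ x : E, ‖A x‖ ≤ L * ‖x‖)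
    {a b : ℝ} (ha : 0 ≤ a) (haL : 4 * L ^ 2 * a ≤ lam) (y : E) {e : E} (he : ‖e‖ ≤ b) :
    ‖y - a • (A y + e)‖ ^ 2 - 2 * b ^ 2 / lam ^ 2
      ≤ (1 - lam * a) * (‖y‖ ^ 2 - 2 * b ^ 2 / lam ^ 2) + 2 * b ^ 2 * a ^ 2 := by
  set n := ‖y‖
  have hn : 0 ≤ n := norm_nonneg y
  have hexpand : ‖y - a • (A y + e)‖ ^ 2
      = n ^ 2 - 2 * (a * ⟪y, A y + e⟫) + a ^ 2 * ‖A y + e‖ ^ 2 := by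
    rw [norm_sub_sq_real, real_inner_smul_right, norm_smul, mul_pow, Real.norm_eq_abs, sq_abs]
  have hinner : lam * n ^ 2 - n * b ≤ ⟪y, A y + e⟫ := by
    rw [inner_add_right, real_inner_comm]
    have hcross : -(n * b) ≤ ⟪y, e⟫ :=
      le_trans (neg_le_neg (by gcongr)) (neg_le_of_abs_le (abs_real_inner_le_norm y e))
    linarith [hmono y]
  have hsq : ‖A y + e‖ ^ 2 ≤ 2 * L ^ 2 * n ^ 2 + 2 * b ^ 2 := by
    have h := (norm_add_le _ _).trans (add_le_add (hlip y) he)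
    nlinarith [norm_nonneg (A y + e), sq_nonneg (L * n - b)]
  -- AM-GM and `hstep` each spend a quarter of the contraction `2 λ a n²`, leaving `λ a n²`.
  have hamgm : 2 * (n * b) ≤ lam * n ^ 2 / 2 + 2 * b ^ 2 / lam := by
    rw [div_add_div _ _ two_ne_zero hlam.ne', le_div_iff₀ (by positivity)]
    nlinarith [sq_nonneg (lam * n - 2 * b)]
  have hstep : 2 * L ^ 2 * a ^ 2 * n ^ 2 ≤ lam * a / 2 * n ^ 2 := by
    nlinarith [mul_nonneg (mul_nonneg ha (sub_nonneg.2 haL)) (sq_nonneg n)]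
  have hcancel : lam * a * (2 * b ^ 2 / lam ^ 2) = a * (2 * b ^ 2 / lam) := by
    field_simp
  rw [hexpand]
  nlinarith [mul_le_mul_of_nonneg_left hinner ha, mul_le_mul_of_nonneg_left hsq (sq_nonneg a),
    mul_le_mul_of_nonneg_left hamgm ha]

theorem eventually_norm_le_add (hlam : 0 < lam) (hL : 0 < L)
    (hmono : ∀ x : E, lam * ‖x‖ ^ 2 ≤ ⟪A x, x⟫) (hlip : ∀ x : E, ‖A x‖ ≤ L * ‖x‖)
    {b : ℝ} {e : ℕ → E} (he : ∀ t, ‖e t‖ ≤ b)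
    {α : ℕ → ℝ} (hα_pos : ∀ t, 0 < α t) (hα_le : ∀ t, α t ≤ lam / (4 * L ^ 2))
    (hα_div : Tendsto (fun n => ∑ t ∈ range n, α t) atTop atTop)
    (hα_sq : Summable (fun t => α t ^ 2))
    {x : ℕ → E} (hx : ∀ t, x (t + 1) = x t - α t • (A (x t) + e t)) {δ : ℝ} (hδ : 0 < δ) :
    ∀ᶠ t in atTop, ‖x t‖ ≤ Real.sqrt 2 * (b / lam) + δ := by
  have hb : 0 ≤ b := (norm_nonneg _).trans (he 0)
  set r := Real.sqrt 2 * (b / lam)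
  have hr : 0 ≤ r := by positivity
  rcases subsingleton_or_nontrivial E with hE | hE
  · exact Eventually.of_forall fun t => by
      rw [Subsingleton.elim (x t) 0, norm_zero]; positivity
  have hr_sq : r ^ 2 = 2 * b ^ 2 / lam ^ 2 := by
    rw [mul_pow, Real.sq_sqrt zero_le_two, div_pow, mul_div_assoc]
  have hαL : ∀ t, 4 * L ^ 2 * α t ≤ lam := fun t => by
    have := hα_le t
    rw [le_div_iff₀ (by positivity)] at this
    linarith
  have hlamL := le_of_forall_mul_norm_sq_le_inner hmono hlip
  -- `λ α_t ≤ λ² / (4 L²) ≤ 1 / 4`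
  have hμ1 : ∀ t, lam * α t ≤ 1 := fun t => by
    nlinarith [hαL t, hα_pos t, mul_le_mul hlamL hlamL hlam.le hL.le]
  have hsmall := eventually_lt_of_le_one_sub_mul_add (u := fun t => ‖x t‖ ^ 2 - r ^ 2)
    (fun t => (mul_pos hlam (hα_pos t)).le) hμ1
    (by simpa [← mul_sum] using hα_div.const_mul_atTop hlam)
    (fun t => by positivity) (hα_sq.mul_left (2 * b ^ 2))
    (fun t => by
      simpa only [hx t, hr_sq] using
        norm_sq_sub_smul_sub_le hlam hmono hlip (hα_pos t).le (hαL t) (x t) (he t))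
    (show 0 < (r + δ) ^ 2 - r ^ 2 by nlinarith)
  filter_upwards [hsmall] with t ht
  exact le_of_sq_le_sq (by linarith) (by positivity)

end Iteration

theorem stmt16_general {E : Type*} [NormedAddCommGroup E] [InnerProductSpace ℝ E]
    (A : E →L[ℝ] E) (lam L : ℝ) (hlam : 0 < lam) (hL : 0 < L)
    (hmono : ∀ x : E, lam * ‖x‖ ^ 2 ≤ ⟪A x, x⟫)
    (hlip : ∀ x : E, ‖A x‖ ≤ L * ‖x‖)
    (B ε : ℝ)
    (e : ℕ → E) (he : ∀ t, ‖e t‖ ≤ B * ε)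
    (α : ℕ → ℝ) (hα_pos : ∀ t, 0 < α t) (hα_le : ∀ t, α t ≤ lam / (4 * L ^ 2))
    (hα_div : Tendsto (fun n => ∑ t ∈ Finset.range n, α t) atTop atTop)
    (hα_sq : Summable (fun t => (α t) ^ 2))
    (x : ℕ → E) (hx : ∀ t, x (t + 1) = x t - α t • (A (x t) + e t)) :
    limsup (fun t => ‖x t‖) atTop ≤ Real.sqrt 2 * (B / lam) * ε ∧
    (ε = 0 → Tendsto (fun t => ‖x t‖) atTop (nhds 0)) := by
  have hnear := fun δ (hδ : 0 < δ) =>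
    eventually_norm_le_add hlam hL hmono hlip he hα_pos hα_le hα_div hα_sq hx hδ
  refine ⟨?_, fun hε => ?_⟩
  · rw [show Real.sqrt 2 * (B / lam) * ε = Real.sqrt 2 * (B * ε / lam) by ring]
    exact limsup_le_of_forall_eventually_le_add (fun t => norm_nonneg _) hnear
  · subst hε
    exact tendsto_nhds_zero_of_forall_eventually_le (fun t => norm_nonneg _)
      fun δ hδ => by simpa using hnear δ hδ

/-- Neighborhood convergence of the perturbed recursion
`x_{t+1} = x_t - α_t (A x_t + e_t)` under strong monotonicity, Lipschitzness, bias
bound `‖e_t‖ ≤ B ε`, and Robbins–Monro step sizes with `0 < α_t ≤ λ/(4L²)`: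
`limsup ‖x_t‖ ≤ √2 (B/λ) ε`; in particular `‖x_t‖ → 0` when `ε = 0`. -/
theorem stmt16 {E : Type*} [NormedAddCommGroup E] [InnerProductSpace ℝ E]
    (A : E →L[ℝ] E) (lam L : ℝ) (hlam : 0 < lam) (hL : 0 < L)
    (hmono : ∀ x : E, lam * ‖x‖ ^ 2 ≤ ⟪A x, x⟫)
    (hlip : ∀ x : E, ‖A x‖ ≤ L * ‖x‖)
    (B ε : ℝ) (hB : 0 ≤ B) (hε : 0 ≤ ε)
    (e : ℕ → E) (he : ∀ t, ‖e t‖ ≤ B * ε)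
    (α : ℕ → ℝ) (hα_pos : ∀ t, 0 < α t) (hα_le : ∀ t, α t ≤ lam / (4 * L ^ 2))
    (hα_to_zero : Tendsto α atTop (nhds 0))
    (hα_div : Tendsto (fun n => ∑ t ∈ Finset.range n, α t) atTop atTop)
    (hα_sq : Summable (fun t => (α t) ^ 2))
    (x : ℕ → E) (hx : ∀ t, x (t + 1) = x t - α t • (A (x t) + e t)) :
    limsup (fun t => ‖x t‖) atTop ≤ Real.sqrt 2 * (B / lam) * ε ∧
    (ε = 0 → Tendsto (fun t => ‖x t‖) atTop (nhds 0)) :=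
  stmt16_general A lam L hlam hL hmono hlip B ε e he α hα_pos hα_le hα_div hα_sq x hx
end
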